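/- With s_n := S_n(X_δ) (normalized Chebyshev of the second kind evaluated at X_δ), for every n ≥ 0: s_n = q^{n/2} X_1 X_{n+3} - q^{n/2+1} X_2 X_{n+2}. -/

import Mathlib

/-- The normalized quantum-torus monomial `X^{(a,b)} = q^{-ab/2} X₁^a X₂^b`,
where `v = q^{1/2}`. -/
def Xmon {F : Type*} [DivisionRing F] (v X1 X2 : F) (a b : ℤ) : F :=
  v ^ (-(a * b)) * X1 ^ a * X2 ^ b

/-- The normalized Chebyshev polynomials of the second kind:
`S 0 = 1`, `S 1 = X`, `S 2 = X^2 - 1`, `S (n+1) = S n * S 1 - S (n-1)` for `n ≥ 2`. -/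
noncomputable def chebS : ℕ → Polynomial ℤ
  | 0 => 1
  | 1 => Polynomial.X
  | 2 => Polynomial.X ^ 2 - 1
  | n + 3 => chebS (n + 2) * Polynomial.X - chebS (n + 1)

/-!
Consecutive cluster variables quasi-commute, `X_m X_{m+1} = q X_{m+1} X_m`: the exchange relation
`X_{m-1} X_{m+1} = q X_m^2 + 1` transports this from `m = 1` to all `m`. Using it,
`D_m = X_m X_{m+3} - q X_{m+1} X_{m+2}` satisfies `q X_{m+2} D_m = q X_{m+3} + X_{m+1} = q X_{m+2} D_{m+1}`,
so `D_m = D` is independent of `m` and `q X_{m+1} D = q X_{m+2} + X_m` for all `m`. Consequently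
the right-hand side `t_n` satisfies the Chebyshev recursion `t_{n+2} = t_{n+1} X_δ - t_n` with
`X_δ = q^{1/2} D`, `t_0 = 1` and `t_1 = X_δ`.
-/

section Chebyshev

open Polynomial

theorem chebS_add_two (n : ℕ) : chebS (n + 2) = chebS (n + 1) * X - chebS n := by
  cases n with
  | zero => simp [chebS, sq]
  | succ n => rfl

theorem aeval_chebS_of_recurrence {A : Type*} [Ring A] (z : A) {t : ℕ → A} (h0 : t 0 = 1)
    (h1 : t 1 = z) (h : ∀ n, t (n + 2) = t (n + 1) * z - t n) (n : ℕ) :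
    aeval z (chebS n) = t n := by
  induction n using Nat.twoStepInduction with
  | zero => simp [chebS, h0]
  | one => simp [chebS, h1]
  | more n ih0 ih1 => rw [chebS_add_two, map_sub, map_mul, aeval_X, ih0, ih1, h]

end Chebyshev

section QuantumKronecker

variable {F : Type*}

section Exchange

variable [Ring F] {q : F}

/- `noncomm_ring` treats a central `q` as an ordinary atom; given these two rules as extra simp
lemmas it moves every `q` to the front, which is enough for the identities below. -/
theorem mul_left_comm_of_central (hq : ∀ y, Commute q y) (y z : F) : y * (q * z) = q * (y * z) :=
  ((hq y).left_comm z).symm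

theorem mul_comm_of_central (hq : ∀ y, Commute q y) (y : F) : y * q = q * y :=
  (hq y).eq.symm

variable [NoZeroDivisors F] {a b c : F}

theorem qcomm_right_of_exchange (hq : ∀ y, Commute q y) (ha : a ≠ 0)
    (hab : a * b = q * (b * a)) (hac : a * c = q * b ^ 2 + 1) : b * c = q * (c * b) := by
  have hl := mul_left_comm_of_central hq
  have hr := mul_comm_of_central hq
  refine mul_left_cancel₀ ha ?_
  calc a * (b * c) = q * (b * (a * c)) := by rw [← mul_assoc, hab]; noncomm_ring [hl, hr]
    _ = q * ((a * c) * b) := by rw [hac]; noncomm_ring [hl, hr]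
    _ = a * (q * (c * b)) := by noncomm_ring [hl, hr]

theorem qcomm_left_of_exchange (hq : ∀ y, Commute q y) (hc : c ≠ 0)
    (hbc : b * c = q * (c * b)) (hac : a * c = q * b ^ 2 + 1) : a * b = q * (b * a) := by
  have hl := mul_left_comm_of_central hq
  have hr := mul_comm_of_central hq
  refine mul_right_cancel₀ hc ?_
  calc a * b * c = q * ((a * c) * b) := by rw [mul_assoc, hbc]; noncomm_ring [hl, hr]
    _ = q * (b * (a * c)) := by rw [hac]; noncomm_ring [hl, hr]
    _ = q * (b * a) * c := by noncomm_ring [hl, hr]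

theorem exchange_swap (hq : ∀ y, Commute q y) (ha : a ≠ 0)
    (hab : a * b = q * (b * a)) (hac : a * c = q * b ^ 2 + 1) : q * (c * a) = b ^ 2 + q := by
  have hl := mul_left_comm_of_central hq
  have hr := mul_comm_of_central hq
  refine mul_left_cancel₀ ha ?_
  have hab' (z : F) : a * (b * z) = q * (b * (a * z)) := by
    rw [← mul_assoc, hab, mul_assoc, mul_assoc]
  calc a * (q * (c * a)) = q * ((a * c) * a) := by noncomm_ring [hl, hr]
    _ = q * ((q * b ^ 2 + 1) * a) := by rw [hac]
    _ = a * (b ^ 2 + q) := by noncomm_ring [hl, hr, hab, hab']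

end Exchange

structure IsExchangeSeq [Ring F] (q : F) (x : ℤ → F) : Prop where
  central : ∀ y, Commute q y
  ne_zero : ∀ m, x m ≠ 0
  exchange : ∀ m, x (m - 1) * x (m + 1) = q * x m ^ 2 + 1
  qcomm : ∀ m, x m * x (m + 1) = q * (x (m + 1) * x m)

/-- With `q = v ^ 2`, the paper's `X_δ` is `v * xDelta q X 0`; `xDelta q x m` does not depend on `m`
(`IsExchangeSeq.xDelta_eq`). -/
def xDelta [Ring F] (q : F) (x : ℤ → F) (m : ℤ) : F :=
  x m * x (m + 3) - q * (x (m + 1) * x (m + 2))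

def sFormula [Ring F] (v a b : F) (x : ℤ → F) (n : ℕ) : F :=
  v ^ n * (a * x (n + 3)) - v ^ (n + 2) * (b * x (n + 2))

namespace IsExchangeSeq

variable [Ring F] {q v : F} {x : ℤ → F}

theorem of_qcomm [NoZeroDivisors F] (hq : ∀ y, Commute q y) (hx : ∀ m, x m ≠ 0)
    (hrec : ∀ m, x (m - 1) * x (m + 1) = q * x m ^ 2 + 1) {k : ℤ}
    (hk : x k * x (k + 1) = q * (x (k + 1) * x k)) : IsExchangeSeq q x := by
  refine ⟨hq, hx, hrec, fun m => Int.inductionOn' m k hk (fun n _ ih => ?_) (fun n _ ih => ?_)⟩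
  · have hrec' := hrec (n + 1)
    rw [add_sub_cancel_right] at hrec'
    exact qcomm_right_of_exchange hq (hx n) ih hrec'
  · rw [sub_add_cancel]
    exact qcomm_left_of_exchange hq (hx (n + 1)) ih (hrec n)

theorem exchange_add_two (hx : IsExchangeSeq q x) (m : ℤ) :
    x m * x (m + 2) = q * x (m + 1) ^ 2 + 1 := by
  simpa [add_assoc] using hx.exchange (m + 1)

theorem q_ne_zero [NoZeroDivisors F] (hx : IsExchangeSeq q x) : q ≠ 0 := by
  intro h
  apply mul_ne_zero (hx.ne_zero 0) (hx.ne_zero 1)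
  simpa [h] using hx.qcomm 0

theorem swap [NoZeroDivisors F] (hx : IsExchangeSeq q x) (m : ℤ) :
    q * (x (m + 1) * x (m - 1)) = x m ^ 2 + q := by
  have hqc := hx.qcomm (m - 1)
  rw [sub_add_cancel] at hqc
  exact exchange_swap hx.central (hx.ne_zero _) hqc (hx.exchange m)

theorem x_add_two_mul_xDelta [NoZeroDivisors F] (hx : IsExchangeSeq q x) (m : ℤ) :
    q * (x (m + 2) * xDelta q x m) = q * x (m + 3) + x (m + 1) := by
  have hl := mul_left_comm_of_central hx.central
  have hr := mul_comm_of_central hx.central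
  have hca : q * (x (m + 2) * x m) = x (m + 1) ^ 2 + q := by
    simpa [add_assoc] using hx.swap (m + 1)
  have hbc : x (m + 1) * x (m + 2) = q * (x (m + 2) * x (m + 1)) := by
    simpa [add_assoc] using hx.qcomm (m + 1)
  have hbe : x (m + 1) * x (m + 3) = q * x (m + 2) ^ 2 + 1 := by
    simpa [add_assoc] using hx.exchange_add_two (m + 1)
  rw [xDelta]
  set a := x m
  set b := x (m + 1)
  set c := x (m + 2)
  set e := x (m + 3)
  calc q * (c * (a * e - q * (b * c))) = q * (c * a) * e - q * (q * (c * b) * c) := by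
        noncomm_ring [hl, hr]
    _ = b * (b * e) + q * e - q * (b * c ^ 2) := by
        rw [hca, ← hbc]; noncomm_ring [hl, hr]
    _ = q * e + b := by
        rw [hbe]; noncomm_ring [hl, hr]

theorem x_add_one_mul_xDelta [NoZeroDivisors F] (hx : IsExchangeSeq q x) (m : ℤ) :
    q * (x (m + 1) * xDelta q x m) = q * x (m + 2) + x m := by
  have hl := mul_left_comm_of_central hx.central
  have hr := mul_comm_of_central hx.central
  have hbc := hx.qcomm m
  have hbe : q * x (m + 1) ^ 2 = x m * x (m + 2) - 1 :=
    eq_sub_of_add_eq (hx.exchange_add_two m).symm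
  have hcf : x (m + 1) * x (m + 3) = q * x (m + 2) ^ 2 + 1 := by
    simpa [add_assoc] using hx.exchange_add_two (m + 1)
  rw [xDelta]
  set b := x m
  set c := x (m + 1)
  set e := x (m + 2)
  set f := x (m + 3)
  calc q * (c * (b * f - q * (c * e))) = q * (c * b) * f - q * (q * c ^ 2 * e) := by
        noncomm_ring [hl, hr]
    _ = b * (c * f) - q * ((b * e - 1) * e) := by
        rw [← hbc, hbe, mul_assoc]
    _ = q * e + b := by
        rw [hcf]; noncomm_ring [hl, hr]

theorem xDelta_periodic [NoZeroDivisors F] (hx : IsExchangeSeq q x) :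
    Function.Periodic (xDelta q x) 1 := by
  intro m
  have h := hx.x_add_one_mul_xDelta (m + 1)
  simp only [add_assoc, Int.reduceAdd] at h
  rw [← hx.x_add_two_mul_xDelta m] at h
  exact mul_left_cancel₀ (hx.ne_zero _) (mul_left_cancel₀ hx.q_ne_zero h)

theorem xDelta_eq [NoZeroDivisors F] (hx : IsExchangeSeq q x) (m : ℤ) :
    xDelta q x m = xDelta q x 0 := by
  simpa using hx.xDelta_periodic.int_mul_eq m

theorem mul_xDelta [NoZeroDivisors F] (hx : IsExchangeSeq q x) (m : ℤ) :
    q * (x (m + 1) * xDelta q x 0) = q * x (m + 2) + x m := by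
  rw [← hx.xDelta_eq m, hx.x_add_one_mul_xDelta]

theorem sFormula_zero (hx : IsExchangeSeq (v ^ 2) x) : sFormula v (x 1) (x 2) x 0 = 1 := by
  have h := hx.exchange 2
  norm_num at h
  simp [sFormula, h, sq]

theorem sFormula_one [NoZeroDivisors F] (hx : IsExchangeSeq (v ^ 2) x) :
    sFormula v (x 1) (x 2) x 1 = v * xDelta (v ^ 2) x 0 := by
  rw [← hx.xDelta_eq 1, xDelta]
  norm_num [sFormula]
  noncomm_ring

theorem sFormula_add_two [NoZeroDivisors F] (hv : ∀ y, Commute v y)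
    (hx : IsExchangeSeq (v ^ 2) x) (a b : F) (n : ℕ) :
    sFormula v a b x (n + 2) = sFormula v a b x (n + 1) * (v * xDelta (v ^ 2) x 0)
      - sFormula v a b x n := by
  have hl := mul_left_comm_of_central hv
  have hr := mul_comm_of_central hv
  have h4 := hx.mul_xDelta (n + 3)
  have h3 := hx.mul_xDelta (n + 2)
  simp only [sFormula]
  push_cast
  simp only [add_assoc, Int.reduceAdd, Nat.reduceAdd] at h3 h4 ⊢
  calc _ = v ^ n * (a * (v ^ 2 * x (n + 5) + x (n + 3)))
        - v ^ (n + 2) * (b * (v ^ 2 * x (n + 4) + x (n + 2)))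
        - (v ^ n * (a * x (n + 3)) - v ^ (n + 2) * (b * x (n + 2))) := by
        noncomm_ring [hl, hr]
    _ = _ := by rw [← h4, ← h3]; noncomm_ring [hl, hr]

end IsExchangeSeq

end QuantumKronecker

theorem sn_eq_general
{F : Type*} [DivisionRing F] (v : F)
    (hvc : ∀ x : F, v * x = x * v)
    (X : ℤ → F) (hXne : ∀ m : ℤ, X m ≠ 0)
    (h12 : X 1 * X 2 = v ^ 2 * (X 2 * X 1))
    (hrec : ∀ m : ℤ, X (m - 1) * X (m + 1) = v ^ 2 * X m ^ 2 + 1) :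
    ∀ n : ℕ,
      Polynomial.aeval (v * (X 0 * X 3 - v ^ 2 * (X 1 * X 2))) (chebS n)
        = v ^ (n : ℤ) * (X 1 * X ((n : ℤ) + 3))
          - v ^ ((n : ℤ) + 2) * (X 2 * X ((n : ℤ) + 2)) := by
  have hv : ∀ y, Commute v y := hvc
  have hX : IsExchangeSeq (v ^ 2) X := .of_qcomm (fun y => (hv y).pow_left 2) hXne hrec h12
  have hδ : xDelta (v ^ 2) X 0 = X 0 * X 3 - v ^ 2 * (X 1 * X 2) := by norm_num [xDelta]
  intro n
  rw [← hδ, aeval_chebS_of_recurrence _ hX.sFormula_zero hX.sFormula_one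
    (hX.sFormula_add_two hv (X 1) (X 2)) n, sFormula]
  norm_cast

/-- With `s_n := S_n(X_δ)`, for every `n ≥ 0`:
`s_n = q^{n/2} X₁ X_{n+3} - q^{n/2+1} X₂ X_{n+2}`. -/
theorem sn_eq
{F : Type*} [DivisionRing F] (v : F) (hv : v ≠ 0)
    (hvc : ∀ x : F, v * x = x * v)
    (X : ℤ → F) (hXne : ∀ m : ℤ, X m ≠ 0)
    (h12 : X 1 * X 2 = v ^ 2 * (X 2 * X 1))
    (hrec : ∀ m : ℤ, X (m - 1) * X (m + 1) = v ^ 2 * X m ^ 2 + 1) :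
    ∀ n : ℕ,
      Polynomial.aeval (v * (X 0 * X 3 - v ^ 2 * (X 1 * X 2))) (chebS n)
        = v ^ (n : ℤ) * (X 1 * X ((n : ℤ) + 3))
          - v ^ ((n : ℤ) + 2) * (X 2 * X ((n : ℤ) + 2)) :=
  sn_eq_general v hvc X hXne h12 hrec
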